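/- Let n ≥ 1 be a natural number and let δ ∈ (0, π). Then Γ^{(n)}(z)/(Γ(z)·(log z)^n) tends to 1 as |z| → ∞ within the sector |arg z| ≤ π − δ; that is, for every ε > 0 there exists R > 0 such that every z ∈ ℂ with |z| ≥ R and |arg z| ≤ π − δ satisfies |Γ^{(n)}(z)/(Γ(z)·(log z)^n) − 1| < ε. -/

import Mathlib

set_option maxHeartbeats 1000000

open Complex Metric

noncomputable section GammaAsympAux

/-- Compatibility: the complex absolute value as an `AbsoluteValue`, equal to the norm. -/
def Complex.abs : AbsoluteValue ℂ ℝ where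
  toFun := fun z => ‖z‖
  map_mul' := norm_mul
  nonneg' := norm_nonneg
  eq_zero' := fun _ => norm_eq_zero
  add_le' := norm_add_le

lemma Complex.abs_apply (z : ℂ) : Complex.abs z = ‖z‖ := rfl

lemma Complex.abs_ofReal (r : ℝ) : Complex.abs (r : ℂ) = |r| := Complex.norm_real r

lemma Complex.abs_two : Complex.abs 2 = 2 := by simp [Complex.abs_apply]

lemma Complex.sq_abs (z : ℂ) : Complex.abs z ^ 2 = Complex.normSq z := Complex.sq_norm z

lemma Complex.continuous_abs : Continuous Complex.abs := continuous_norm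

lemma Complex.norm_eq_abs (z : ℂ) : ‖z‖ = Complex.abs z := rfl

/-- Auxiliary set: points staying proportionally far from the negative real axis. -/
def Sec (c : ℝ) : Set ℂ := {z | ∀ t : ℝ, 0 ≤ t → c * (Complex.abs z + t) ≤ Complex.abs (z + t)}

lemma sec_mono {c c' : ℝ} (h : c' ≤ c) {z : ℂ} (hz : z ∈ Sec c) : z ∈ Sec c' := by
  intro t ht
  refine le_trans ?_ (hz t ht)
  have : (0:ℝ) ≤ Complex.abs z + t := by positivity
  nlinarith

lemma sec_of_arg {δ : ℝ} (hδ : 0 < δ) (hδπ : δ < Real.pi) {z : ℂ}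
    (h : |z.arg| ≤ Real.pi - δ) : z ∈ Sec (Real.sin (δ/2)) := by
  intro t ht
  rcases eq_or_ne z 0 with rfl | hz0
  · have h1 : Real.sin (δ/2) ≤ 1 := Real.sin_le_one _
    have h2 : Complex.abs ((0:ℂ) + t) = t := by
      rw [zero_add, Complex.abs_ofReal, _root_.abs_of_nonneg ht]
    rw [h2, map_zero, zero_add]
    have hs0 : 0 ≤ Real.sin (δ/2) := by
      apply Real.sin_nonneg_of_nonneg_of_le_pi <;> nlinarith [Real.pi_pos]
    nlinarith
  · have habs : 0 < Complex.abs z := Complex.abs.pos hz0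
    have hre : z.re = Complex.abs z * Real.cos z.arg := by
      rw [Complex.cos_arg hz0, Complex.abs_apply]; field_simp
    have hcos : Real.cos (Real.pi - δ) ≤ Real.cos z.arg := by
      rw [← Real.cos_abs z.arg]
      apply Real.cos_le_cos_of_nonneg_of_le_pi (abs_nonneg _) (by linarith [Real.pi_pos]) h
    rw [Real.cos_pi_sub] at hcos
    have hre' : -(Real.cos δ) * Complex.abs z ≤ z.re := by nlinarith
    have hsq : (Real.sin (δ/2))^2 = (1 - Real.cos δ)/2 := by
      have := Real.sin_sq_eq_half_sub (δ/2)
      rw [show 2*(δ/2) = δ by ring] at this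
      linarith
    have hc1 : Real.cos δ ≤ 1 := Real.cos_le_one δ
    have hcm1 : -1 ≤ Real.cos δ := Real.neg_one_le_cos δ
    -- |z+t|^2 = |z|^2 + 2 t re z + t^2
    have habs2 : (Complex.abs (z + t))^2 = (Complex.abs z)^2 + 2*t*z.re + t^2 := by
      rw [Complex.sq_abs, Complex.sq_abs, Complex.normSq_apply, Complex.normSq_apply]
      simp [Complex.add_re, Complex.add_im, Complex.ofReal_re, Complex.ofReal_im]
      ring
    have hs0 : 0 ≤ Real.sin (δ/2) := by
      apply Real.sin_nonneg_of_nonneg_of_le_pi <;> nlinarith [Real.pi_pos]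
    have hgoal2 : (Real.sin (δ/2) * (Complex.abs z + t))^2 ≤ (Complex.abs (z + t))^2 := by
      rw [habs2]
      have expand : (Real.sin (δ/2) * (Complex.abs z + t))^2
          = (Real.sin (δ/2))^2 * (Complex.abs z + t)^2 := by ring
      rw [expand, hsq]
      nlinarith [sq_nonneg (Complex.abs z - t), hre']
    have h2 : 0 ≤ Real.sin (δ/2) * (Complex.abs z + t) := by positivity
    nlinarith [Complex.abs.nonneg (z + t)]

lemma sec_add_nonneg {c : ℝ} (hc : 0 ≤ c) {z : ℂ} (hz : z ∈ Sec c) {a : ℝ} (ha : 0 ≤ a) :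
    z + a ∈ Sec c := by
  intro t ht
  have h1 := hz (a + t) (by linarith)
  have h2 : z + ↑a + ↑t = z + ↑(a + t) := by push_cast; ring
  rw [h2]
  refine le_trans ?_ h1
  have h3 : Complex.abs (z + a) ≤ Complex.abs z + a := by
    calc Complex.abs (z + a) ≤ Complex.abs z + Complex.abs (a:ℂ) := Complex.abs.add_le _ _
    _ = Complex.abs z + a := by rw [Complex.abs_ofReal, _root_.abs_of_nonneg ha]
  nlinarith

lemma sec_half {c : ℝ} {z : ℂ} (hz : z ∈ Sec c) : z / 2 ∈ Sec c := by
  intro t ht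
  have h1 := hz (2*t) (by linarith)
  have h2 : z / 2 + ↑t = (z + ↑(2*t))/2 := by push_cast; ring
  rw [h2, map_div₀, map_div₀]
  simp only [Complex.abs_two]
  linarith

lemma sec_two_mul {c : ℝ} {z : ℂ} (hz : z ∈ Sec c) : 2 * z ∈ Sec c := by
  intro t ht
  have h1 := hz (t/2) (by linarith)
  have h2 : 2 * z + ↑t = 2*(z + ↑(t/2)) := by push_cast; ring
  rw [h2, map_mul, map_mul]
  simp only [Complex.abs_two]
  linarith

lemma sec_ne_neg_nat {c : ℝ} (hc : 0 < c) {z : ℂ} (hz : z ∈ Sec c) (hz0 : z ≠ 0)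
    (m : ℕ) : z ≠ -m := by
  intro h
  have h1 := hz m (by positivity)
  rw [h] at h1
  push_cast at h1
  rw [show -(m:ℂ) + (m:ℂ) = 0 by ring, map_zero] at h1
  have h2 : 0 < Complex.abs (-(m:ℂ)) + m := by
    have := Complex.abs.pos (show -(m:ℂ) ≠ 0 by rw [← h]; exact hz0)
    positivity
  nlinarith

lemma sec_gamma_ne_zero {c : ℝ} (hc : 0 < c) {z : ℂ} (hz : z ∈ Sec c) (hz0 : z ≠ 0) :
    Complex.Gamma z ≠ 0 :=
  Complex.Gamma_ne_zero (sec_ne_neg_nat hc hz hz0)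

lemma sec_mem_slitPlane {c : ℝ} (hc : 0 < c) {z : ℂ} (hz : z ∈ Sec c) (hz0 : z ≠ 0) :
    z ∈ Complex.slitPlane := by
  rw [Complex.mem_slitPlane_iff]
  by_contra hcon
  push_neg at hcon
  obtain ⟨h1, h2⟩ := hcon
  -- z is a nonpositive real
  have hz' : z = ((z.re : ℂ)) := by
    apply Complex.ext <;> simp [h2]
  have h3 := hz (-z.re) (by linarith)
  have h4 : z + ↑(-z.re) = 0 := by
    rw [hz']
    push_cast
    ring_nf
    simp
  rw [h4, map_zero] at h3
  have h5 : 0 < Complex.abs z := Complex.abs.pos hz0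
  nlinarith

lemma sec_disk {c : ℝ} (hc : 0 < c) (hc1 : c ≤ 1) {z w : ℂ} (hz : z ∈ Sec c)
    (hw : w ∈ closedBall z (c * Complex.abs z / 4)) :
    w ∈ Sec (c/2) ∧ 3/4 * Complex.abs z ≤ Complex.abs w ∧ Complex.abs w ≤ 2 * Complex.abs z := by
  rw [Metric.mem_closedBall, dist_eq_norm] at hw
  have hwz : Complex.abs (w - z) ≤ c * Complex.abs z / 4 := hw
  have habs : Complex.abs z ≤ Complex.abs w + Complex.abs (w - z) := by
    calc Complex.abs z = Complex.abs (w - (w - z)) := by congr 1; ring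
    _ ≤ Complex.abs w + Complex.abs (w - z) := by
        simpa using Complex.abs.sub_le_add w (w - z)
  have habs' : Complex.abs w ≤ Complex.abs z + Complex.abs (w - z) := by
    calc Complex.abs w = Complex.abs (z + (w - z)) := by congr 1; ring
    _ ≤ Complex.abs z + Complex.abs (w - z) := Complex.abs.add_le _ _
  have hz4 : c * Complex.abs z / 4 ≤ Complex.abs z / 4 := by
    have := Complex.abs.nonneg z; nlinarith
  refine ⟨?_, by nlinarith, by nlinarith⟩
  intro t ht
  have h1 := hz t ht
  have h2 : Complex.abs (z + t) ≤ Complex.abs (w + t) + Complex.abs (w - z) := by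
    calc Complex.abs (z + t) = Complex.abs ((w + t) - (w - z)) := by congr 1; ring
    _ ≤ Complex.abs (w + t) + Complex.abs (w - z) := by
        simpa using Complex.abs.sub_le_add (w + ↑t) (w - z)
  nlinarith

/-! ### Log lemmas -/

lemma log_two_mul_comm {z : ℂ} (hz : z ≠ 0) :
    Complex.log (2 * z) = (Real.log 2 : ℂ) + Complex.log z := by
  apply Complex.ext
  · rw [Complex.add_re, Complex.log_re, Complex.log_re, Complex.ofReal_re, norm_mul,
      Complex.norm_two, Real.log_mul two_ne_zero (norm_ne_zero_iff.mpr hz)]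
  · rw [Complex.add_im, Complex.log_im, Complex.log_im, Complex.ofReal_im, zero_add]
    rw [show (2:ℂ) = ((2:ℝ):ℂ) by norm_num]
    exact Complex.arg_real_mul z two_pos

lemma complex_log_two : Complex.log 2 = (Real.log 2 : ℂ) := by
  rw [show (2:ℂ) = ((2:ℝ):ℂ) by norm_num, Complex.ofReal_log (by norm_num : (0:ℝ) ≤ 2)]

lemma norm_log_ge_log_abs {z : ℂ} (h1 : 1 ≤ Complex.abs z) :
    Real.log (Complex.abs z) ≤ ‖Complex.log z‖ := by
  have h2 : 0 ≤ Real.log (Complex.abs z) := Real.log_nonneg h1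
  calc Real.log (Complex.abs z) = |(Complex.log z).re| := by
        rw [Complex.log_re, Complex.norm_eq_abs, _root_.abs_of_nonneg h2]
  _ ≤ ‖Complex.log z‖ := Complex.abs_re_le_norm _

lemma one_le_norm_log {z : ℂ} (h3 : 3 ≤ Complex.abs z) : 1 ≤ ‖Complex.log z‖ := by
  have h1 : (1:ℝ) ≤ Real.log (Complex.abs z) := by
    rw [Real.le_log_iff_exp_le (by linarith)]
    calc Real.exp 1 ≤ 2.7182818286 := Real.exp_one_lt_d9.le
    _ ≤ 3 := by norm_num
    _ ≤ Complex.abs z := h3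
  linarith [norm_log_ge_log_abs (by linarith : 1 ≤ Complex.abs z)]

lemma norm_log_le {z : ℂ} (h1 : 1 ≤ Complex.abs z) :
    ‖Complex.log z‖ ≤ Real.log (Complex.abs z) + Real.pi := by
  calc ‖Complex.log z‖ ≤ |(Complex.log z).re| + |(Complex.log z).im| :=
        Complex.norm_le_abs_re_add_abs_im _
  _ ≤ Real.log (Complex.abs z) + Real.pi := by
      rw [Complex.log_re, Complex.log_im]
      gcongr
      · rw [Complex.norm_eq_abs, _root_.abs_of_nonneg (Real.log_nonneg h1)]
      · exact Complex.abs_arg_le_pi z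

lemma log_diff_half {c : ℝ} (hc : 0 < c) {z : ℂ} (hz : z ∈ Sec c)
    (h1 : 1 ≤ Complex.abs z) :
    ‖Complex.log (z + 1/2) - Complex.log z‖ ≤ 1 / (2 * c * Complex.abs z) := by
  have habs : 0 < Complex.abs z := by linarith
  have hz0 : z ≠ 0 := by intro h; rw [h] at habs; simp at habs
  have hslit : ∀ t : ℝ, 0 ≤ t → z + (t:ℂ) ∈ Complex.slitPlane := by
    intro t ht
    have hmem : z + (t:ℂ) ∈ Sec c := sec_add_nonneg hc.le hz ht
    have hne : z + (t:ℂ) ≠ 0 := by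
      intro h
      have := hz t ht
      rw [h, map_zero] at this
      nlinarith
    exact sec_mem_slitPlane hc hmem hne
  have hlb : ∀ t : ℝ, 0 ≤ t → c * Complex.abs z ≤ Complex.abs (z + t) := by
    intro t ht
    have := hz t ht
    nlinarith
  have hder : ∀ t ∈ Set.uIcc (0:ℝ) (1/2), HasDerivAt (fun t : ℝ => Complex.log (z + t))
      ((z + (t:ℂ))⁻¹) t := by
    intro t ht
    rw [Set.uIcc_of_le (by norm_num : (0:ℝ) ≤ 1/2)] at ht
    have h := (Complex.hasDerivAt_log (hslit t ht.1)).comp_const_add z (t:ℂ)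
    exact h.comp_ofReal
  have hcont : IntervalIntegrable (fun t : ℝ => (z + (t:ℂ))⁻¹) MeasureTheory.volume 0 (1/2) := by
    apply ContinuousOn.intervalIntegrable
    apply ContinuousOn.inv₀
    · exact (continuous_const.add Complex.continuous_ofReal).continuousOn
    · intro t ht
      rw [Set.uIcc_of_le (by norm_num : (0:ℝ) ≤ 1/2)] at ht
      exact Complex.slitPlane_ne_zero (hslit t ht.1)
  have hftc := intervalIntegral.integral_eq_sub_of_hasDerivAt hder hcont
  have heq : Complex.log (z + 1/2) - Complex.log z
      = ∫ t in (0:ℝ)..(1/2), (z + (t:ℂ))⁻¹ := by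
    rw [hftc]
    norm_num
  rw [heq]
  have hbound := intervalIntegral.norm_integral_le_of_norm_le_const
    (C := 1/(c * Complex.abs z)) (f := fun t : ℝ => (z + (t:ℂ))⁻¹)
    (a := 0) (b := 1/2) ?_
  · calc ‖∫ t in (0:ℝ)..(1/2), (z + (t:ℂ))⁻¹‖ ≤ 1/(c * Complex.abs z) * |1/2 - 0| := hbound
    _ = 1 / (2 * c * Complex.abs z) := by
        rw [show |(1:ℝ)/2 - 0| = 1/2 by norm_num]
        field_simp
  · intro t ht
    rw [Set.uIoc_of_le (by norm_num : (0:ℝ) ≤ 1/2)] at ht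
    have ht0 : 0 ≤ t := ht.1.le
    rw [norm_inv, one_div]
    have h2 := hlb t ht0
    have h3 : 0 < c * Complex.abs z := by positivity
    have h2' : c * Complex.abs z ≤ ‖z + (t:ℂ)‖ := h2
    gcongr

/-! ### Gamma infrastructure -/

def UU : Set ℂ := {z : ℂ | Complex.Gamma z ≠ 0}

lemma isOpen_UU : IsOpen UU := by
  have h : UU = (fun z => (Complex.Gamma z)⁻¹) ⁻¹' {(0:ℂ)}ᶜ := by
    ext z
    simp [UU, inv_eq_zero]
  rw [h]
  exact isOpen_compl_singleton.preimage Complex.differentiable_one_div_Gamma.continuous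

lemma gamma_ne_neg_nat {z : ℂ} (h : Complex.Gamma z ≠ 0) : ∀ m : ℕ, z ≠ -m :=
  fun m hm => h (by rw [hm]; exact Complex.Gamma_neg_nat_eq_zero m)

lemma gamma_diffOn : DifferentiableOn ℂ Complex.Gamma UU := fun z hz =>
  (Complex.differentiableAt_Gamma z (gamma_ne_neg_nat hz)).differentiableWithinAt

lemma gamma_analytic : AnalyticOnNhd ℂ Complex.Gamma UU :=
  gamma_diffOn.analyticOnNhd isOpen_UU

lemma iter_analytic (k : ℕ) : AnalyticOnNhd ℂ (iteratedDeriv k Complex.Gamma) UU := by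
  induction k with
  | zero => simpa [iteratedDeriv_zero] using gamma_analytic
  | succ k ih => rw [iteratedDeriv_succ]; exact ih.deriv

/-- `Γ⁽ᵏ⁾/Γ`. -/
def GG (k : ℕ) (z : ℂ) : ℂ := iteratedDeriv k Complex.Gamma z / Complex.Gamma z

lemma GG_diffOn (k : ℕ) : DifferentiableOn ℂ (GG k) UU :=
  ((iter_analytic k).differentiableOn).div (gamma_analytic.differentiableOn) (fun _ hz => hz)

lemma hasDerivAt_GG (k : ℕ) {z : ℂ} (hz : Complex.Gamma z ≠ 0) :
    HasDerivAt (GG k) (GG (k+1) z - GG k z * GG 1 z) z := by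
  have hzU : z ∈ UU := hz
  have hΓ : HasDerivAt Complex.Gamma (deriv Complex.Gamma z) z :=
    (Complex.differentiableAt_Gamma z (gamma_ne_neg_nat hz)).hasDerivAt
  have hk : HasDerivAt (iteratedDeriv k Complex.Gamma)
      (iteratedDeriv (k+1) Complex.Gamma z) z := by
    have hd : DifferentiableAt ℂ (iteratedDeriv k Complex.Gamma) z :=
      ((iter_analytic k) z hzU).differentiableAt
    rw [iteratedDeriv_succ]
    exact hd.hasDerivAt
  have h : HasDerivAt (fun y => iteratedDeriv k Complex.Gamma y / Complex.Gamma y) _ z :=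
    hk.div hΓ hz
  refine h.congr_deriv ?_
  simp only [GG, iteratedDeriv_one]
  field_simp

/-- Differentiated Legendre duplication formula: `ψ(z) + ψ(z+1/2) = 2ψ(2z) - 2 log 2`. -/
lemma psi_dup {z : ℂ} (h1 : Complex.Gamma z ≠ 0) (h2 : Complex.Gamma (z + 1/2) ≠ 0)
    (h3 : Complex.Gamma (2*z) ≠ 0) :
    deriv Complex.Gamma z / Complex.Gamma z
      + deriv Complex.Gamma (z + 1/2) / Complex.Gamma (z + 1/2)
      = 2 * (deriv Complex.Gamma (2*z) / Complex.Gamma (2*z)) - 2 * (Real.log 2 : ℂ) := by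
  have hA : HasDerivAt Complex.Gamma (deriv Complex.Gamma z) z :=
    (Complex.differentiableAt_Gamma z (gamma_ne_neg_nat h1)).hasDerivAt
  have hB0 : HasDerivAt Complex.Gamma (deriv Complex.Gamma (z + 1/2)) (z + 1/2) :=
    (Complex.differentiableAt_Gamma _ (gamma_ne_neg_nat h2)).hasDerivAt
  have hB : HasDerivAt (fun s => Complex.Gamma (s + 1/2))
      (deriv Complex.Gamma (z + 1/2)) z := hB0.comp_add_const z _
  have hC0 : HasDerivAt Complex.Gamma (deriv Complex.Gamma (2*z)) (2*z) :=
    (Complex.differentiableAt_Gamma _ (gamma_ne_neg_nat h3)).hasDerivAt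
  have hlin : HasDerivAt (fun s : ℂ => 2 * s) 2 z := by
    simpa using (hasDerivAt_id z).const_mul (2:ℂ)
  have hC : HasDerivAt (fun s => Complex.Gamma (2*s))
      (deriv Complex.Gamma (2*z) * 2) z := hC0.comp z hlin
  have hin : HasDerivAt (fun s : ℂ => 1 - 2*s) (-2) z := by
    simpa using ((hasDerivAt_id z).const_mul (2:ℂ)).const_sub 1
  have hP : HasDerivAt (fun s : ℂ => (2:ℂ) ^ (1 - 2*s))
      ((2:ℂ)^(1-2*z) * Complex.log 2 * (-2)) z := hin.const_cpow (Or.inl two_ne_zero)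
  have hf : HasDerivAt (fun s => Complex.Gamma s * Complex.Gamma (s + 1/2))
      (deriv Complex.Gamma z * Complex.Gamma (z + 1/2)
        + Complex.Gamma z * deriv Complex.Gamma (z + 1/2)) z := hA.mul hB
  have hg : HasDerivAt (fun s => Complex.Gamma (2*s) * (2:ℂ)^(1-2*s) * ((Real.sqrt Real.pi : ℝ):ℂ))
      ((deriv Complex.Gamma (2*z) * 2 * (2:ℂ)^(1-2*z)
        + Complex.Gamma (2*z) * ((2:ℂ)^(1-2*z) * Complex.log 2 * (-2)))
        * ((Real.sqrt Real.pi : ℝ):ℂ)) z := (hC.mul hP).mul_const _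
  have hfg : (fun s => Complex.Gamma s * Complex.Gamma (s + 1/2))
      = (fun s => Complex.Gamma (2*s) * (2:ℂ)^(1-2*s) * ((Real.sqrt Real.pi : ℝ):ℂ)) :=
    funext fun s => Complex.Gamma_mul_Gamma_add_half s
  have hD : deriv Complex.Gamma z * Complex.Gamma (z + 1/2)
        + Complex.Gamma z * deriv Complex.Gamma (z + 1/2)
      = (deriv Complex.Gamma (2*z) * 2 * (2:ℂ)^(1-2*z)
        + Complex.Gamma (2*z) * ((2:ℂ)^(1-2*z) * Complex.log 2 * (-2)))
        * ((Real.sqrt Real.pi : ℝ):ℂ) := by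
    exact hf.unique (hfg ▸ hg)
  have hv : Complex.Gamma z * Complex.Gamma (z + 1/2)
      = Complex.Gamma (2*z) * (2:ℂ)^(1-2*z) * ((Real.sqrt Real.pi : ℝ):ℂ) :=
    Complex.Gamma_mul_Gamma_add_half z
  have hP0 : (2:ℂ)^(1-2*z) ≠ 0 := by
    rw [Complex.cpow_def_of_ne_zero two_ne_zero]
    exact Complex.exp_ne_zero _
  have hπ0 : ((Real.sqrt Real.pi : ℝ):ℂ) ≠ 0 := by
    rw [Complex.ofReal_ne_zero]
    positivity
  rw [← complex_log_two]
  set A := Complex.Gamma z with hA1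
  set A' := deriv Complex.Gamma z with hA2
  set B := Complex.Gamma (z+1/2) with hB1
  set B' := deriv Complex.Gamma (z+1/2) with hB2
  set C := Complex.Gamma (2*z) with hC1
  set C' := deriv Complex.Gamma (2*z) with hC2
  set P := (2:ℂ)^(1-2*z) with hP1
  set Q := ((Real.sqrt Real.pi : ℝ):ℂ) with hQ1
  set L := Complex.log 2 with hL1
  field_simp
  linear_combination C * hD - (2 * C' - 2 * L * C) * hv

/-! ### The digamma function is `log z + O(1)` on `Sec c` -/

/-- The digamma function `ψ = Γ'/Γ`. -/
def psi (z : ℂ) : ℂ := deriv Complex.Gamma z / Complex.Gamma z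

lemma GG_one (z : ℂ) : GG 1 z = psi z := by
  simp [GG, psi, iteratedDeriv_one]

lemma half_cast : ((1/2 : ℝ) : ℂ) = (1/2 : ℂ) := by norm_num

lemma sec_add_half {c : ℝ} (hc : 0 ≤ c) {z : ℂ} (hz : z ∈ Sec c) : z + 1/2 ∈ Sec c := by
  have := sec_add_nonneg hc hz (by norm_num : (0:ℝ) ≤ 1/2)
  rwa [half_cast] at this

lemma isClosed_sec (c : ℝ) : IsClosed (Sec c) := by
  have h : Sec c = ⋂ (t : ℝ) (_ : 0 ≤ t),
      {z : ℂ | c * (Complex.abs z + t) ≤ Complex.abs (z + t)} := by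
    ext z; simp [Sec]
  rw [h]
  refine isClosed_iInter fun t => isClosed_iInter fun ht => ?_
  apply isClosed_le
  · exact (continuous_const.mul (Complex.continuous_abs.add continuous_const))
  · exact Complex.continuous_abs.comp (continuous_id.add continuous_const)

lemma psi_sub_log_bound {c : ℝ} (hc0 : 0 < c) (hc1 : c ≤ 1) :
    ∃ C : ℝ, 0 ≤ C ∧ ∀ z ∈ Sec c, 1 ≤ Complex.abs z →
      ‖psi z - Complex.log z‖ ≤ C := by
  set E : ℂ → ℂ := fun z => psi z - Complex.log z with hE
  set K : Set ℂ := Sec c ∩ {z | 1 ≤ Complex.abs z ∧ Complex.abs z ≤ 4} with hK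
  have hKne : ∀ z ∈ K, z ≠ 0 := by
    intro z hz h0
    have h1 : 1 ≤ Complex.abs z := hz.2.1
    rw [h0, map_zero] at h1
    linarith
  have hKU : ∀ z ∈ K, Complex.Gamma z ≠ 0 := fun z hz =>
    sec_gamma_ne_zero hc0 hz.1 (hKne z hz)
  -- compactness
  have hKcl : IsClosed K := by
    refine (isClosed_sec c).inter ?_
    have : {z : ℂ | 1 ≤ Complex.abs z ∧ Complex.abs z ≤ 4}
        = {z : ℂ | 1 ≤ Complex.abs z} ∩ {z | Complex.abs z ≤ 4} := rfl
    rw [this]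
    exact (isClosed_le continuous_const Complex.continuous_abs).inter
      (isClosed_le Complex.continuous_abs continuous_const)
  have hKcompact : IsCompact K := by
    refine (isCompact_closedBall (0:ℂ) 4).of_isClosed_subset hKcl ?_
    intro z hz
    rw [Metric.mem_closedBall, dist_zero_right]
    exact hz.2.2
  -- continuity
  have hcont : ContinuousOn E K := by
    apply ContinuousOn.sub
    · apply ContinuousOn.div
      · exact ((gamma_analytic.deriv).continuousOn).mono (fun z hz => hKU z hz)
      · exact (gamma_analytic.continuousOn).mono (fun z hz => hKU z hz)
      · exact hKU
    · intro z hz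
      exact (continuousAt_clog
        (sec_mem_slitPlane hc0 hz.1 (hKne z hz))).continuousWithinAt
  obtain ⟨M₀, hM₀⟩ := hKcompact.exists_bound_of_continuousOn hcont
  set M : ℝ := max M₀ 0 with hM
  have hMnn : 0 ≤ M := le_max_right _ _
  have hMb : ∀ z ∈ K, ‖E z‖ ≤ M := fun z hz => (hM₀ z hz).trans (le_max_left _ _)
  -- the key doubling inequality
  have key : ∀ s ∈ Sec c, 1 ≤ Complex.abs s →
      ‖E (2*s)‖ ≤ (‖E s‖ + ‖E (s + 1/2)‖)/2 + 1/(4*c*Complex.abs s) := by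
    intro s hs h1
    have hs0 : s ≠ 0 := by
      intro h; rw [h] at h1; simp at h1; linarith
    have hG1 : Complex.Gamma s ≠ 0 := sec_gamma_ne_zero hc0 hs hs0
    have hs2 : s + 1/2 ∈ Sec c := sec_add_half hc0.le hs
    have hs2abs : Complex.abs s - 1/2 ≤ Complex.abs (s + 1/2) := by
      have := Complex.abs.sub_le_add (s + 1/2) (1/2 : ℂ)
      simp only [add_sub_cancel_right] at this
      have h12 : Complex.abs (1/2 : ℂ) = 1/2 := by norm_num [Complex.abs_two]
      linarith [this, h12 ▸ this]
    have hs20 : s + 1/2 ≠ 0 := by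
      intro h
      have : Complex.abs (s + 1/2) = 0 := by rw [h]; simp
      linarith
    have hG2 : Complex.Gamma (s + 1/2) ≠ 0 := sec_gamma_ne_zero hc0 hs2 hs20
    have hs3 : 2*s ∈ Sec c := sec_two_mul hs
    have hs30 : 2*s ≠ 0 := by simp [hs0]
    have hG3 : Complex.Gamma (2*s) ≠ 0 := sec_gamma_ne_zero hc0 hs3 hs30
    have hdup := psi_dup hG1 hG2 hG3
    have hlog2 := log_two_mul_comm hs0
    have hld := log_diff_half hc0 hs h1
    have hEeq : E (2*s) = (E s + E (s + 1/2))/2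
        + (Complex.log (s + 1/2) - Complex.log s)/2 := by
      simp only [hE, psi]
      rw [hlog2]
      linear_combination -hdup/2
    rw [hEeq]
    calc ‖(E s + E (s + 1/2))/2 + (Complex.log (s + 1/2) - Complex.log s)/2‖
        ≤ ‖(E s + E (s + 1/2))/2‖ + ‖(Complex.log (s + 1/2) - Complex.log s)/2‖ :=
          norm_add_le _ _
    _ ≤ (‖E s‖ + ‖E (s + 1/2)‖)/2 + 1/(4*c*Complex.abs s) := by
        gcongr
        · rw [norm_div, Complex.norm_ofNat]
          have := norm_add_le (E s) (E (s + 1/2))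
          linarith
        · rw [norm_div, Complex.norm_ofNat]
          have h4 : 1/(2*c*Complex.abs s)/2 = 1/(4*c*Complex.abs s) := by
            have hs' : Complex.abs s ≠ 0 := by positivity
            field_simp
            ring
          linarith
  -- induction over dyadic annuli
  have main : ∀ k : ℕ, ∀ z ∈ Sec c, 1 ≤ Complex.abs z →
      Complex.abs z ≤ 2^k + 2 → ‖E z‖ ≤ M + (1 - (1/2:ℝ)^k)/c := by
    intro k
    induction k with
    | zero =>
      intro z hz h1 h2
      have h3 : Complex.abs z ≤ 4 := by norm_num at h2; linarith
      have h5 := hMb z ⟨hz, h1, h3⟩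
      simp only [pow_zero, sub_self, zero_div, add_zero]
      linarith
    | succ k ih =>
      intro z hz h1 h2
      by_cases hcase : Complex.abs z ≤ 2^k + 2
      · refine (ih z hz h1 hcase).trans ?_
        have hp : ((1/2:ℝ))^(k+1) ≤ (1/2)^k :=
          pow_le_pow_of_le_one (by norm_num) (by norm_num) (Nat.le_succ k)
        have hmono : (1 - (1/2:ℝ)^k)/c ≤ (1 - (1/2:ℝ)^(k+1))/c := by gcongr
        linarith
      · push_neg at hcase
        set s := z/2 with hs_def
        have hz2s : z = 2*s := by rw [hs_def]; ring
        have hsS : s ∈ Sec c := sec_half hz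
        have habs_s : Complex.abs s = Complex.abs z / 2 := by
          rw [hs_def, map_div₀, Complex.abs_two]
        have hpow1 : (1:ℝ) ≤ 2^k := one_le_pow₀ (by norm_num)
        have hs1 : 1 ≤ Complex.abs s := by rw [habs_s]; nlinarith
        have hs_ub : Complex.abs s ≤ 2^k + 2 := by
          rw [habs_s]
          rw [pow_succ] at h2
          nlinarith
        have hs2S : s + 1/2 ∈ Sec c := sec_add_half hc0.le hsS
        have habs_s2_ub : Complex.abs (s + 1/2) ≤ Complex.abs s + 1/2 := by
          have h12 : Complex.abs (1/2 : ℂ) = 1/2 := by norm_num [Complex.abs_two]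
          calc Complex.abs (s + 1/2) ≤ Complex.abs s + Complex.abs (1/2:ℂ) :=
            Complex.abs.add_le _ _
          _ = Complex.abs s + 1/2 := by rw [h12]
        have habs_s2_lb : Complex.abs s - 1/2 ≤ Complex.abs (s + 1/2) := by
          have h12 : Complex.abs (1/2 : ℂ) = 1/2 := by norm_num [Complex.abs_two]
          have := Complex.abs.sub_le_add (s + 1/2) (1/2 : ℂ)
          simp only [add_sub_cancel_right] at this
          linarith [h12 ▸ this]
        have hs32 : (3:ℝ)/2 ≤ Complex.abs s := by
          rw [habs_s]; nlinarith
        have hs21 : 1 ≤ Complex.abs (s + 1/2) := by linarith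
        have hs_ub2 : Complex.abs s ≤ 2^k + 1 := by
          rw [habs_s]
          rw [pow_succ] at h2
          nlinarith
        have hs2ub : Complex.abs (s + 1/2) ≤ 2^k + 2 := by linarith
        have hkey := key s hsS hs1
        have hihs := ih s hsS hs1 hs_ub
        have hihs2 := ih (s + 1/2) hs2S hs21 hs2ub
        have herr : 1/(4*c*Complex.abs s) ≤ ((1/2:ℝ))^(k+1)/c := by
          have hslb : (2:ℝ)^k / 2 ≤ Complex.abs s := by rw [habs_s]; nlinarith
          have hpos : (0:ℝ) < 4*c*((2:ℝ)^k/2) := by positivity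
          have h5 : 1/(4*c*Complex.abs s) ≤ 1/(4*c*((2:ℝ)^k/2)) := by
            apply one_div_le_one_div_of_le hpos
            nlinarith
          have heq : ((1/2:ℝ))^(k+1)/c = 1/(4*c*((2:ℝ)^k/2)) := by
            rw [div_pow, one_pow, pow_succ]
            have h2k : ((2:ℝ)^k) ≠ 0 := by positivity
            field_simp
            ring
          rw [heq]
          exact h5
        rw [hz2s]
        calc ‖E (2*s)‖ ≤ (‖E s‖ + ‖E (s + 1/2)‖)/2 + 1/(4*c*Complex.abs s) := hkey
        _ ≤ ((M + (1 - (1/2:ℝ)^k)/c) + (M + (1 - (1/2:ℝ)^k)/c))/2 + ((1/2:ℝ))^(k+1)/c := by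
            gcongr
        _ = M + (1 - (1/2:ℝ)^k)/c + ((1/2:ℝ))^(k+1)/c := by ring
        _ = M + (1 - (1/2:ℝ)^(k+1))/c := by
            rw [pow_succ]
            field_simp
            ring
  refine ⟨M + 1/c, by positivity, ?_⟩
  intro z hz h1
  obtain ⟨n, hn⟩ := exists_nat_ge (Complex.abs z)
  have hn2 : (n:ℝ) ≤ 2^n := by
    exact_mod_cast (Nat.lt_two_pow_self (n := n)).le
  have hp2 : (1:ℝ) ≤ 2^n := one_le_pow₀ (by norm_num)
  have hb := main n z hz h1 (by linarith)
  have hfrac : (1 - (1/2:ℝ)^n)/c ≤ 1/c := by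
    have hpn : (0:ℝ) ≤ (1/2)^n := by positivity
    gcongr
    linarith
  linarith

/-! ### Main induction: `Γ⁽ᵏ⁾/Γ = (log z)^k (1 + O(1/log z))` -/

lemma GG_asymp : ∀ k : ℕ, 1 ≤ k → ∀ c : ℝ, 0 < c → c ≤ 1 →
    ∃ C : ℝ, 0 ≤ C ∧ ∃ R : ℝ, 9 ≤ R ∧ ∀ z ∈ Sec c, R ≤ Complex.abs z →
      ‖GG k z - (Complex.log z)^k‖ ≤ C * ‖Complex.log z‖^(k-1) := by
  intro k hk
  induction k, hk using Nat.le_induction with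
  | base =>
    intro c hc0 hc1
    obtain ⟨C, hC0, hC⟩ := psi_sub_log_bound hc0 hc1
    refine ⟨C, hC0, 9, le_refl _, ?_⟩
    intro z hz hger
    have h1 : 1 ≤ Complex.abs z := by linarith
    have := hC z hz h1
    simpa [GG_one, pow_one] using this
  | succ k hk ih =>
    intro c hc0 hc1
    have hc20 : 0 < c/2 := by linarith
    have hc21 : c/2 ≤ 1 := by linarith
    obtain ⟨C₀, hC₀0, R₀, hR₀9, hIH⟩ := ih (c/2) hc20 hc21
    obtain ⟨Cψ, hCψ0, hCψ⟩ := psi_sub_log_bound hc20 hc21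
    refine ⟨4*(1+C₀)*5^k/c + (1+C₀)*Cψ + C₀, by positivity, max 9 (2*R₀),
      le_max_left _ _, ?_⟩
    intro z hz hR
    have hz9 : 9 ≤ Complex.abs z := le_trans (le_max_left _ _) hR
    have hzR0 : 2*R₀ ≤ Complex.abs z := le_trans (le_max_right _ _) hR
    have hz3 : 3 ≤ Complex.abs z := by linarith
    have hz1 : 1 ≤ Complex.abs z := by linarith
    have hz0 : z ≠ 0 := by
      intro h; rw [h, map_zero] at hz1; linarith
    have hzsec2 : z ∈ Sec (c/2) := sec_mono (by linarith) hz
    have hΓz : Complex.Gamma z ≠ 0 := sec_gamma_ne_zero hc0 hz hz0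
    set ρ : ℝ := c * Complex.abs z / 4 with hρdef
    have hρ : 0 < ρ := by
      have : 0 < Complex.abs z := by linarith
      positivity
    -- disk facts
    have hdisk : ∀ w ∈ closedBall z ρ, w ∈ Sec (c/2) ∧
        3/4 * Complex.abs z ≤ Complex.abs w ∧ Complex.abs w ≤ 2 * Complex.abs z :=
      fun w hw => sec_disk hc0 hc1 hz hw
    have hwU : closedBall z ρ ⊆ UU := by
      intro w hw
      obtain ⟨hw1, hw2, hw3⟩ := hdisk w hw
      have hw0 : w ≠ 0 := by
        intro h; rw [h, map_zero] at hw2; nlinarith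
      exact sec_gamma_ne_zero hc20 hw1 hw0
    set L : ℝ := Real.log (Complex.abs z) + 4 with hLdef
    have hlog1 : 1 ≤ Real.log (Complex.abs z) := by
      rw [Real.le_log_iff_exp_le (by linarith)]
      calc Real.exp 1 ≤ 2.7182818286 := Real.exp_one_lt_d9.le
      _ ≤ 9 := by norm_num
      _ ≤ Complex.abs z := hz9
    have hL0 : 0 ≤ L := by rw [hLdef]; linarith
    have hlogz1 : 1 ≤ ‖Complex.log z‖ := one_le_norm_log hz3
    have hlogzlb : Real.log (Complex.abs z) ≤ ‖Complex.log z‖ := norm_log_ge_log_abs hz1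
    have hL5 : L ≤ 5 * ‖Complex.log z‖ := by
      rw [hLdef]
      nlinarith
    -- bound for GG k on the sphere
    have hsphere : ∀ w ∈ Metric.sphere z ρ, ‖GG k w‖ ≤ (1+C₀) * L^k := by
      intro w hw
      have hw' : w ∈ closedBall z ρ := Metric.sphere_subset_closedBall hw
      obtain ⟨hw1, hw2, hw3⟩ := hdisk w hw'
      have hwR₀ : R₀ ≤ Complex.abs w := by nlinarith
      have hw3' : 3 ≤ Complex.abs w := by nlinarith
      have hw1' : 1 ≤ Complex.abs w := by linarith
      have hIHw := hIH w hw1 hwR₀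
      have hlw1 : 1 ≤ ‖Complex.log w‖ := one_le_norm_log hw3'
      have hlwk : ‖Complex.log w‖^(k-1) ≤ ‖Complex.log w‖^k :=
        pow_le_pow_right₀ hlw1 (Nat.sub_le k 1)
      have hlwL : ‖Complex.log w‖ ≤ L := by
        have h1 := norm_log_le hw1'
        have h2 : Real.log (Complex.abs w) ≤ Real.log (2 * Complex.abs z) :=
          Real.log_le_log (by linarith) hw3
        rw [Real.log_mul (by norm_num) (by linarith)] at h2
        have h3 : Real.log 2 < 0.6931471808 := Real.log_two_lt_d9
        have h4 : Real.pi < 3.15 := Real.pi_lt_d2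
        rw [hLdef]
        nlinarith
      have hlwLk : ‖Complex.log w‖^k ≤ L^k := pow_le_pow_left₀ (norm_nonneg _) hlwL k
      have hGlek : ‖GG k w‖ ≤ ‖Complex.log w‖^k + C₀ * ‖Complex.log w‖^(k-1) := by
        have h1 := norm_sub_norm_le (GG k w) ((Complex.log w)^k)
        rw [norm_pow] at h1
        linarith
      calc ‖GG k w‖ ≤ ‖Complex.log w‖^k + C₀ * ‖Complex.log w‖^(k-1) := hGlek
      _ ≤ ‖Complex.log w‖^k + C₀ * ‖Complex.log w‖^k := by
          exact add_le_add_right (mul_le_mul_of_nonneg_left hlwk hC₀0) _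
      _ = (1+C₀) * ‖Complex.log w‖^k := by ring
      _ ≤ (1+C₀) * L^k := mul_le_mul_of_nonneg_left hlwLk (by linarith)
    -- Cauchy estimate
    have hdiffcl : DiffContOnCl ℂ (GG k) (Metric.ball z ρ) := by
      apply DifferentiableOn.diffContOnCl
      rw [closure_ball z hρ.ne']
      exact (GG_diffOn k).mono hwU
    have hcauchy : ‖deriv (GG k) z‖ ≤ (1+C₀) * L^k / ρ :=
      Complex.norm_deriv_le_of_forall_mem_sphere_norm_le hρ hdiffcl hsphere
    -- derivative bound in terms of ‖log z‖^k
    have hLk : L^k ≤ 5^k * ‖Complex.log z‖^k := by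
      calc L^k ≤ (5*‖Complex.log z‖)^k := pow_le_pow_left₀ hL0 hL5 k
      _ = 5^k * ‖Complex.log z‖^k := mul_pow _ _ _
    have hT1 : ‖deriv (GG k) z‖ ≤ (4*(1+C₀)*5^k/c) * ‖Complex.log z‖^k := by
      have habs0 : (0:ℝ) < Complex.abs z := by linarith
      calc ‖deriv (GG k) z‖ ≤ (1+C₀) * L^k / ρ := hcauchy
      _ = 4*(1+C₀)*L^k/(c * Complex.abs z) := by
          rw [hρdef]; field_simp
      _ ≤ 4*(1+C₀)*(5^k * ‖Complex.log z‖^k)/(c * Complex.abs z) := by gcongr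
      _ ≤ 4*(1+C₀)*(5^k * ‖Complex.log z‖^k)/(c * 1) := by
          gcongr <;> first | positivity | linarith
      _ = (4*(1+C₀)*5^k/c) * ‖Complex.log z‖^k := by
          rw [mul_one]; ring
    -- recursion
    have hrec : deriv (GG k) z = GG (k+1) z - GG k z * psi z := by
      rw [(hasDerivAt_GG k hΓz).deriv, GG_one]
    have hGdecomp : GG (k+1) z - (Complex.log z)^(k+1)
        = deriv (GG k) z + GG k z * (psi z - Complex.log z)
          + (GG k z - (Complex.log z)^k) * Complex.log z := by
      rw [hrec, pow_succ]
      ring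
    have hψ : ‖psi z - Complex.log z‖ ≤ Cψ := hCψ z hzsec2 hz1
    have hR₀z : R₀ ≤ Complex.abs z := by nlinarith
    have hGkz : ‖GG k z - (Complex.log z)^k‖ ≤ C₀ * ‖Complex.log z‖^(k-1) :=
      hIH z hzsec2 hR₀z
    have hpowk : ‖Complex.log z‖^(k-1) ≤ ‖Complex.log z‖^k :=
      pow_le_pow_right₀ hlogz1 (Nat.sub_le k 1)
    have hGkz' : ‖GG k z‖ ≤ (1+C₀) * ‖Complex.log z‖^k := by
      have h1 := norm_sub_norm_le (GG k z) ((Complex.log z)^k)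
      rw [norm_pow] at h1
      nlinarith
    have hterm2 : ‖GG k z * (psi z - Complex.log z)‖ ≤ (1+C₀)*Cψ * ‖Complex.log z‖^k := by
      rw [norm_mul]
      calc ‖GG k z‖ * ‖psi z - Complex.log z‖
          ≤ ((1+C₀) * ‖Complex.log z‖^k) * Cψ := by
            apply mul_le_mul hGkz' hψ (norm_nonneg _) (by positivity)
      _ = (1+C₀)*Cψ * ‖Complex.log z‖^k := by ring
    have hterm3 : ‖(GG k z - (Complex.log z)^k) * Complex.log z‖
        ≤ C₀ * ‖Complex.log z‖^k := by
      rw [norm_mul]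
      have hkk : k - 1 + 1 = k := Nat.succ_pred_eq_of_pos hk
      calc ‖GG k z - (Complex.log z)^k‖ * ‖Complex.log z‖
          ≤ (C₀ * ‖Complex.log z‖^(k-1)) * ‖Complex.log z‖ := by
            apply mul_le_mul_of_nonneg_right hGkz (norm_nonneg _)
      _ = C₀ * ‖Complex.log z‖^(k-1+1) := by rw [pow_succ]; ring
      _ = C₀ * ‖Complex.log z‖^k := by rw [hkk]
    have hexp : (k+1) - 1 = k := Nat.add_sub_cancel k 1
    rw [hexp, hGdecomp]
    calc ‖deriv (GG k) z + GG k z * (psi z - Complex.log z)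
          + (GG k z - (Complex.log z)^k) * Complex.log z‖
        ≤ ‖deriv (GG k) z‖ + ‖GG k z * (psi z - Complex.log z)‖
          + ‖(GG k z - (Complex.log z)^k) * Complex.log z‖ := by
          refine (norm_add_le _ _).trans ?_
          gcongr
          exact norm_add_le _ _
    _ ≤ (4*(1+C₀)*5^k/c) * ‖Complex.log z‖^k + (1+C₀)*Cψ * ‖Complex.log z‖^k
          + C₀ * ‖Complex.log z‖^k := by
          exact add_le_add (add_le_add hT1 hterm2) hterm3
    _ = (4*(1+C₀)*5^k/c + (1+C₀)*Cψ + C₀) * ‖Complex.log z‖^k := by ring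

end GammaAsympAux

/-- Asymptotics of the `n`-th derivative of the Gamma function in sectors:
`Γ⁽ⁿ⁾(z)/(Γ(z)·(log z)ⁿ) → 1` as `|z| → ∞` with `|arg z| ≤ π - δ`. -/
theorem gamma_iteratedDeriv_asymptotic (n : ℕ) (hn : 1 ≤ n) (δ : ℝ) (hδ : 0 < δ)
    (hδπ : δ < Real.pi) :
    ∀ ε : ℝ, 0 < ε → ∃ R : ℝ, 0 < R ∧ ∀ z : ℂ, R ≤ ‖z‖ →
      |z.arg| ≤ Real.pi - δ →
      ‖iteratedDeriv n Complex.Gamma z /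
        (Complex.Gamma z * (Complex.log z) ^ n) - 1‖ < ε := by
  intro ε hε
  set c := Real.sin (δ/2) with hc
  have hc0 : 0 < c := Real.sin_pos_of_pos_of_lt_pi (by linarith) (by linarith [Real.pi_pos])
  have hc1 : c ≤ 1 := Real.sin_le_one _
  obtain ⟨C, hC0, R₁, hR₁9, hmain⟩ := GG_asymp n hn c hc0 hc1
  refine ⟨max R₁ (Real.exp ((C+1)/ε)), lt_of_lt_of_le (by norm_num) ((by linarith : (9:ℝ) ≤ R₁).trans (le_max_left _ _)), ?_⟩
  intro z hzR harg
  have hzsec : z ∈ Sec c := sec_of_arg hδ hδπ harg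
  have hzR₁ : R₁ ≤ Complex.abs z := le_trans (le_max_left _ _) hzR
  have hzexp : Real.exp ((C+1)/ε) ≤ Complex.abs z := le_trans (le_max_right _ _) hzR
  have hz9 : 9 ≤ Complex.abs z := by linarith
  have hz3 : 3 ≤ Complex.abs z := by linarith
  have hz1 : 1 ≤ Complex.abs z := by linarith
  have hz0 : z ≠ 0 := by
    intro h; rw [h, map_zero] at hz1; linarith
  have hΓ : Complex.Gamma z ≠ 0 := sec_gamma_ne_zero hc0 hzsec hz0
  have hlog1 : 1 ≤ ‖Complex.log z‖ := one_le_norm_log hz3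
  have hlog0 : Complex.log z ≠ 0 := by
    intro h; rw [h, norm_zero] at hlog1; linarith
  have hlogn : (Complex.log z)^n ≠ 0 := pow_ne_zero _ hlog0
  have hmainz := hmain z hzsec hzR₁
  have heq : iteratedDeriv n Complex.Gamma z / (Complex.Gamma z * (Complex.log z)^n) - 1
      = (GG n z - (Complex.log z)^n) / (Complex.log z)^n := by
    simp only [GG]
    field_simp
  rw [heq, norm_div, norm_pow]
  have hnn : n - 1 + 1 = n := Nat.succ_pred_eq_of_pos hn
  have hlogpos : (0:ℝ) < ‖Complex.log z‖ := by linarith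
  have hpowpos : (0:ℝ) < ‖Complex.log z‖^n := by positivity
  have h1 : ‖GG n z - (Complex.log z)^n‖ / ‖Complex.log z‖^n
      ≤ (C * ‖Complex.log z‖^(n-1)) / ‖Complex.log z‖^n := by gcongr
  have h2 : (C * ‖Complex.log z‖^(n-1)) / ‖Complex.log z‖^n = C / ‖Complex.log z‖ := by
    have hp : ‖Complex.log z‖^(n-1) ≠ 0 := by positivity
    calc (C * ‖Complex.log z‖^(n-1)) / ‖Complex.log z‖^n
        = (C * ‖Complex.log z‖^(n-1)) / (‖Complex.log z‖^(n-1) * ‖Complex.log z‖) := by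
          rw [← pow_succ, hnn]
    _ = C / ‖Complex.log z‖ := by
          rw [div_eq_div_iff (by positivity) (ne_of_gt hlogpos)]
          ring
  have hde : (0:ℝ) < (C+1)/ε := by positivity
  have hlb : (C+1)/ε ≤ ‖Complex.log z‖ := by
    have h3 : (C+1)/ε ≤ Real.log (Complex.abs z) := by
      rw [Real.le_log_iff_exp_le (by linarith)]
      exact hzexp
    linarith [norm_log_ge_log_abs hz1]
  have h4 : C / ‖Complex.log z‖ ≤ C / ((C+1)/ε) := by gcongr
  have h5 : C / ((C+1)/ε) < ε := by
    rw [div_lt_iff₀ hde]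
    have he : ε * ((C+1)/ε) = C+1 := by field_simp
    rw [he]
    linarith
  calc ‖GG n z - (Complex.log z)^n‖ / ‖Complex.log z‖^n
      ≤ (C * ‖Complex.log z‖^(n-1)) / ‖Complex.log z‖^n := h1
  _ = C / ‖Complex.log z‖ := h2
  _ ≤ C / ((C+1)/ε) := h4
  _ < ε := h5
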